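/- arXiv:2307.05997 — 2 statements merged into one kernel-verified Lean document; each statement's English description precedes it below -/
import Mathlib

section
/- For d ≥ 2 and i in {2,...,d-1}, every monomial appearing with nonzero coefficient in R_i = Res(f, H_i(f)) ∈ Z[a_1,...,a_{d-1}] has total degree at least d-i+1, and the unique monomial of total degree exactly d-i+1 is a_{d-1}^{d-i} a_{d-i} (with coefficient (-1)^{(d-1)(d-i)} C(d,i)^{d-1}). -/
open Polynomial

/-- The Sylvester matrix of `f` (regarded as having degree `m`) and `g`
(regarded as having degree `n`). -/
def sylvester {R : Type*} [CommRing R] (f g : Polynomial R) (m n : ℕ) :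
    Matrix (Fin (m + n)) (Fin (m + n)) R :=
  Matrix.of fun i j =>
    if (i : ℕ) < n then
      (if (i : ℕ) ≤ j ∧ (j : ℕ) ≤ (i : ℕ) + m then f.coeff (m + i - j) else 0)
    else
      (if (i : ℕ) - n ≤ j ∧ (j : ℕ) ≤ ((i : ℕ) - n) + n then g.coeff (n + ((i : ℕ) - n) - j) else 0)

/-- The resultant of `f` and `g`, regarded as polynomials of degrees `m` and `n`. -/
def res {R : Type*} [CommRing R] (f g : Polynomial R) (m n : ℕ) : R :=
  (_root_.sylvester f g m n).det

/-- The generic monic polynomial `x^d + a_1 x^{d-1} + ⋯ + a_{d-1} x` with zero constant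
term over `ℤ[a_1, …, a_{d-1}]`, where `MvPolynomial.X j` plays the role of `a_j`. -/
noncomputable def genF (d : ℕ) : Polynomial (MvPolynomial ℕ ℤ) :=
  X ^ d + ∑ j ∈ Finset.Icc 1 (d - 1), C (MvPolynomial.X j) * X ^ (d - j)

/-- `R_i = Res(f, H_i(f))`, the resultant of the generic polynomial and its `i`-th Hasse
derivative, regarded as polynomials of degrees `d` and `d - i`. -/
noncomputable def Rres (d i : ℕ) : MvPolynomial ℕ ℤ :=
  res (genF d) (Polynomial.hasseDeriv i (genF d)) d (d - i)

/-!
Since `f` has no constant term, the last column of the Sylvester matrix of `f` and `H_i(f)` vanishes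
except for the corner entry `H_i(f)(0) = a_{d-i}`, so `R_i = Q * a_{d-i}` for the complementary
minor `Q`. Giving `a_j` the weight `j`, every entry of the Sylvester matrix is weighted homogeneous,
and `Q` is isobaric of weight `(d-1)(d-i)`. Since only `a_1, …, a_{d-1}` occur, every monomial of `Q`
has degree at least `d - i`, with equality only for `a_{d-1}^{d-i}`. Its coefficient survives the
substitution `a_j = 0` for `j < d - 1`, which turns `f` into `x^d + a_{d-1} x` and `H_i(f)` into
`C(d,i) x^{d-i}`; the minor then becomes triangular after a cyclic shift of its rows.
-/

section Matrix

variable {ι : Type*} [Fintype ι] [DecidableEq ι]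

theorem Matrix.det_mem {A S : Type*} [CommRing A] [SetLike S A] [SubringClass S A] (s : S)
    {M : Matrix ι ι A} (h : ∀ i j, M i j ∈ s) : M.det ∈ s := by
  rw [Matrix.det_apply]
  exact sum_mem fun π _ => by
    rw [Units.smul_def]
    exact zsmul_mem (prod_mem fun j _ => h _ _) _

theorem Matrix.isWeightedHomogeneous_det {R σ : Type*} [CommRing R] {w : σ → ℤ}
    (M : Matrix ι ι (MvPolynomial σ R)) (a b : ι → ℤ)
    (h : ∀ i j, (M i j).IsWeightedHomogeneous w (b j - a i)) :
    M.det.IsWeightedHomogeneous w (∑ j, b j - ∑ i, a i) := by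
  rw [Matrix.det_apply]
  refine MvPolynomial.IsWeightedHomogeneous.sum _ _ _ fun π _ => ?_
  have hprod := MvPolynomial.IsWeightedHomogeneous.prod Finset.univ (fun j => M (π j) j)
    (fun j => b j - a (π j)) fun j _ => h _ _
  rw [Finset.sum_sub_distrib, Equiv.sum_comp π a] at hprod
  rw [← MvPolynomial.mem_weightedHomogeneousSubmodule] at hprod
  rw [Units.smul_def, ← MvPolynomial.mem_weightedHomogeneousSubmodule]
  exact zsmul_mem hprod _

end Matrix

theorem Equiv.Perm.sign_finCycle {K k : ℕ} (hk : k < K) :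
    Equiv.Perm.sign (finCycle (⟨k, hk⟩ : Fin K)) = (-1) ^ ((K - 1) * k) := by
  rw [show finCycle (⟨k, hk⟩ : Fin K) = finRotate K ^ k from
      DFunLike.coe_injective (finCycle_eq_finRotate_iterate.trans (Equiv.Perm.coe_pow _ _).symm),
    map_pow, sign_finRotate, ← pow_mul]

theorem Fin.prod_univ_ite_val_lt {M : Type*} [CommMonoid M] {K p : ℕ} (hp : p ≤ K) (b a : M) :
    ∏ r : Fin K, (if (r : ℕ) < p then b else a) = b ^ p * a ^ (K - p) := by
  rw [Fin.prod_univ_eq_prod_range (fun k => if k < p then b else a),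
    show K = p + (K - p) by omega, Finset.prod_range_add,
    Finset.prod_congr rfl fun k hk => if_pos (Finset.mem_range.mp hk),
    Finset.prod_congr rfl fun k _ => if_neg (by omega), Nat.add_sub_cancel_left]
  simp

section Sylvester

variable {R S σ : Type*} [CommRing R] [CommRing S] {w : σ → ℤ}

noncomputable def sylvesterMinor (f g : R[X]) (m n : ℕ) : R :=
  ((_root_.sylvester f g m (n + 1)).submatrix Fin.castSucc Fin.castSucc).det

theorem sylvester_apply_last {f g : R[X]} {m : ℕ} (n : ℕ) (hm : 0 < m) (hf : f.coeff 0 = 0)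
    (r : Fin (m + (n + 1))) :
    _root_.sylvester f g m (n + 1) r (Fin.last (m + n)) =
      if r = Fin.last (m + n) then g.coeff 0 else 0 := by
  have hr := r.isLt
  simp only [_root_.sylvester, Matrix.of_apply, Fin.val_last, Fin.ext_iff]
  split_ifs <;> first
    | rfl | (exfalso; omega) | (congr 1; omega)
    | (rw [show m + (r : ℕ) - (m + n) = 0 by omega]; exact hf)

theorem res_eq_sylvesterMinor_mul {f g : R[X]} {m : ℕ} (n : ℕ) (hm : 0 < m)
    (hf : f.coeff 0 = 0) : res f g m (n + 1) = sylvesterMinor f g m n * g.coeff 0 := by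
  rw [res, Matrix.det_succ_column (n := m + n) _ (Fin.last _),
    Finset.sum_eq_single (Fin.last _) (fun r _ hr => by simp [sylvester_apply_last n hm hf, hr])
      (by simp)]
  simp [sylvester_apply_last n hm hf, sylvesterMinor, ← two_mul, mul_comm]

theorem sylvester_map (φ : R →+* S) (f g : R[X]) (m n : ℕ) :
    (_root_.sylvester f g m n).map φ = _root_.sylvester (f.map φ) (g.map φ) m n := by
  ext i j
  simp only [Matrix.map_apply, _root_.sylvester, Matrix.of_apply]
  split_ifs <;> simp

theorem sylvesterMinor_map (φ : R →+* S) (f g : R[X]) (m n : ℕ) :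
    φ (sylvesterMinor f g m n) = sylvesterMinor (f.map φ) (g.map φ) m n := by
  rw [sylvesterMinor, RingHom.map_det, RingHom.mapMatrix_apply, ← Matrix.submatrix_map,
    sylvester_map, sylvesterMinor]

theorem sylvesterMinor_mem {T : Type*} [SetLike T R] [SubringClass T R] (s : T) {f g : R[X]}
    {m : ℕ} (n : ℕ) (hf : ∀ k, f.coeff k ∈ s) (hg : ∀ k, g.coeff k ∈ s) :
    sylvesterMinor f g m n ∈ s :=
  Matrix.det_mem s fun i j => by
    simp only [Matrix.submatrix_apply, _root_.sylvester, Matrix.of_apply]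
    split_ifs <;> first | exact zero_mem s | apply hf | apply hg

-- Row `i` holds the coefficients of `f` shifted by `i`, or those of `g` shifted by `i - n`.
theorem isWeightedHomogeneous_sylvester_apply {f g : (MvPolynomial σ R)[X]} {m n : ℕ}
    (hf : ∀ k, (f.coeff k).IsWeightedHomogeneous w (m - k))
    (hg : ∀ k, (g.coeff k).IsWeightedHomogeneous w (n - k)) (i j : Fin (m + n)) :
    (_root_.sylvester f g m n i j).IsWeightedHomogeneous w
      (j - if (i : ℕ) < n then (i : ℤ) else i - n) := by
  simp only [_root_.sylvester, Matrix.of_apply]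
  split_ifs
  · convert hf _ using 1
    omega
  · exact MvPolynomial.isWeightedHomogeneous_zero _ _ _
  · convert hg _ using 1
    omega
  · exact MvPolynomial.isWeightedHomogeneous_zero _ _ _

theorem isWeightedHomogeneous_sylvesterMinor {f g : (MvPolynomial σ R)[X]} {m : ℕ} (n : ℕ)
    (hm : 0 < m) (hf : ∀ k, (f.coeff k).IsWeightedHomogeneous w (m - k))
    (hg : ∀ k, (g.coeff k).IsWeightedHomogeneous w ((n + 1 : ℕ) - k)) :
    (sylvesterMinor f g m n).IsWeightedHomogeneous w ((n + 1) * (m - 1) : ℕ) := by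
  have h := Matrix.isWeightedHomogeneous_det
    ((_root_.sylvester f g m (n + 1)).submatrix Fin.castSucc Fin.castSucc)
    (fun i => if (i : ℕ) < n + 1 then (i : ℤ) else i - (n + 1 : ℕ)) (fun j => (j : ℤ))
    fun i j => isWeightedHomogeneous_sylvester_apply hf hg i.castSucc j.castSucc
  convert h using 1
  · rfl
  rw [← Finset.sum_sub_distrib, Fin.sum_univ_eq_sum_range
    (fun k => (k : ℤ) - if k < n + 1 then (k : ℤ) else k - (n + 1 : ℕ)),
    Nat.add_eq, show m + n = (n + 1) + (m - 1) by omega, Finset.sum_range_add,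
    Finset.sum_eq_zero fun k hk => by simp [Finset.mem_range.mp hk], zero_add,
    Finset.sum_congr rfl fun k _ => show _ = ((n + 1 : ℕ) : ℤ) by rw [if_neg (by omega)]; ring,
    Finset.sum_const, Finset.card_range, nsmul_eq_mul]
  push_cast
  ring

theorem sylvester_X_pow_add_C_mul_X_apply (a b : R) {m : ℕ} (n : ℕ) (hm : 2 ≤ m)
    (i j : Fin (m + (n + 1))) :
    _root_.sylvester (X ^ m + C a * X) (C b * X ^ (n + 1)) m (n + 1) i j =
      if (i : ℕ) < n + 1 then
        (if (j : ℕ) = i then 1 else if (j : ℕ) = i + (m - 1) then a else 0)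
      else if (j : ℕ) = i - (n + 1) then b else 0 := by
  simp only [_root_.sylvester, Matrix.of_apply, coeff_add, coeff_X_pow, coeff_C_mul, coeff_X]
  split_ifs <;> first | (exfalso; omega) | simp

-- Shifting the rows cyclically by `n + 1` puts the `m - 1` rows of `C b * X ^ (n + 1)` first and
-- makes the matrix lower triangular, with diagonal `b, …, b, a, …, a`.
theorem sylvesterMinor_X_pow_add_C_mul_X (a b : R) {m : ℕ} (n : ℕ) (hm : 2 ≤ m) :
    sylvesterMinor (X ^ m + C a * X) (C b * X ^ (n + 1)) m n =
      (-1) ^ ((m - 1) * (n + 1)) * b ^ (m - 1) * a ^ (n + 1) := by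
  set M := (_root_.sylvester (X ^ m + C a * X) (C b * X ^ (n + 1)) m (n + 1)).submatrix
    Fin.castSucc Fin.castSucc
  set ρ : Equiv.Perm (Fin (m + n)) := finCycle ⟨n + 1, by omega⟩
  have hρ (r : Fin (m + n)) :
      (ρ r : ℕ) = if (r : ℕ) < m - 1 then r + (n + 1) else r - (m - 1) := by
    have := r.isLt
    simp only [ρ, finCycle_apply, Fin.val_add]
    split_ifs
    · exact Nat.mod_eq_of_lt (by omega)
    · rw [Nat.mod_eq_sub_mod (by omega), Nat.mod_eq_of_lt (by omega)]
      omega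
  have hentry (r c : Fin (m + n)) : (M.submatrix ρ id) r c =
      if (r : ℕ) < m - 1 then (if c = r then b else 0)
      else if (c : ℕ) = r - (m - 1) then 1 else if c = r then a else 0 := by
    have := r.isLt
    simp only [M, Matrix.submatrix_apply, id, sylvester_X_pow_add_C_mul_X_apply a b n hm,
      Fin.val_castSucc, hρ, Fin.ext_iff]
    split_ifs <;> first | rfl | (exfalso; omega)
  have htri : (M.submatrix ρ id).IsLowerTriangular := fun r c (hrc : r < c) => by
    simp only [hentry, Fin.ext_iff]
    split_ifs <;> first | rfl | (exfalso; omega)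
  have hdiag (r : Fin (m + n)) :
      (M.submatrix ρ id) r r = if (r : ℕ) < m - 1 then b else a := by
    simp only [hentry]
    split_ifs <;> first | rfl | (exfalso; omega)
  have hsign : (Equiv.Perm.sign ρ : R) = (-1) ^ ((m - 1) * (n + 1)) := by
    rw [Equiv.Perm.sign_finCycle, show m + n - 1 = (m - 1) + n by omega, add_mul, pow_add,
      (Nat.even_mul_succ_self n).neg_one_pow, mul_one]
    push_cast
    rfl
  have hdet := Matrix.det_permute ρ M
  rw [Matrix.det_of_isLowerTriangular _ htri, Finset.prod_congr rfl fun r _ => hdiag r,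
    Fin.prod_univ_ite_val_lt (by omega), show m + n - (m - 1) = n + 1 by omega, hsign] at hdet
  calc M.det = ((-1) ^ ((m - 1) * (n + 1)) * (-1) ^ ((m - 1) * (n + 1))) * M.det := by
        rw [← mul_pow]; simp
    _ = _ := by rw [mul_assoc, ← hdet, mul_assoc]

end Sylvester

theorem Polynomial.hasseDeriv_map {R S : Type*} [Semiring R] [Semiring S] (φ : R →+* S)
    (k : ℕ) (f : R[X]) : (hasseDeriv k f).map φ = hasseDeriv k (f.map φ) := by
  ext n
  simp [hasseDeriv_coeff]

theorem hasseDeriv_coeff_mem {A S : Type*} [CommRing A] [SetLike S A] [SubringClass S A] (s : S)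
    {f : A[X]} (hf : ∀ k, f.coeff k ∈ s) (i k : ℕ) :
    (hasseDeriv i f).coeff k ∈ s := by
  rw [hasseDeriv_coeff]
  exact mul_mem (natCast_mem s _) (hf _)

theorem isWeightedHomogeneous_hasseDeriv_coeff {R σ : Type*} [CommRing R] {w : σ → ℤ}
    {f : (MvPolynomial σ R)[X]} {m : ℤ} (hf : ∀ k, (f.coeff k).IsWeightedHomogeneous w (m - k))
    (i k : ℕ) : ((hasseDeriv i f).coeff k).IsWeightedHomogeneous w (m - i - k) := by
  rw [hasseDeriv_coeff, ← map_natCast MvPolynomial.C]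
  convert (hf (k + i)).C_mul _ using 1
  push_cast
  ring

theorem hasseDeriv_X_pow_add_C_mul_X {R : Type*} [CommRing R] (a : R) (m : ℕ) {k : ℕ}
    (hk : 2 ≤ k) : hasseDeriv k (X ^ m + C a * X) = C (m.choose k : R) * X ^ (m - k) := by
  rw [map_add, ← smul_eq_C_mul, map_smul, hasseDeriv_X k hk, smul_zero, add_zero,
    ← monomial_one_right_eq_X_pow, hasseDeriv_monomial, C_mul_X_pow_eq_monomial, mul_one]

open Finsupp in
theorem Finsupp.weight_le_mul_degree {k : ℕ} {u : ℕ →₀ ℕ} (hu : ∀ j ∈ u.support, j ≤ k) :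
    weight (fun j : ℕ => (j : ℤ)) u ≤ k * u.degree := by
  rw [weight_apply, Finsupp.sum, degree_apply, Nat.cast_sum, Finset.mul_sum]
  exact Finset.sum_le_sum fun j hj => by
    rw [nsmul_eq_mul, mul_comm]
    exact mul_le_mul_of_nonneg_right (by exact_mod_cast hu j hj) (by positivity)

open Finsupp in
theorem Finsupp.eq_single_of_weight_eq_mul_degree {k : ℕ} {u : ℕ →₀ ℕ}
    (hu : ∀ j ∈ u.support, j ≤ k) (h : weight (fun j : ℕ => (j : ℤ)) u = k * u.degree) :
    u = single k u.degree := by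
  have hle (j) (hj : j ∈ u.support) : u j • (j : ℤ) ≤ k * (u j : ℤ) := by
    rw [nsmul_eq_mul, mul_comm]
    exact mul_le_mul_of_nonneg_right (by exact_mod_cast hu j hj) (by positivity)
  rw [weight_apply, Finsupp.sum, degree_apply, Nat.cast_sum, Finset.mul_sum] at h
  have hk : u.support ⊆ {k} := fun j hj => by
    have hj0 : (u j : ℤ) ≠ 0 := by exact_mod_cast Finsupp.mem_support_iff.mp hj
    have := (Finset.sum_eq_sum_iff_of_le hle).mp h j hj
    rw [nsmul_eq_mul, mul_comm (k : ℤ)] at this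
    exact Finset.mem_singleton.mpr (by exact_mod_cast mul_left_cancel₀ hj0 this)
  rw [Finsupp.support_subset_singleton.mp hk, degree_single]

theorem MvPolynomial.mem_of_mem_supported {R σ : Type*} [CommSemiring R] {s : Set σ}
    {p : MvPolynomial σ R} (hs : p ∈ supported R s) {u : σ →₀ ℕ} (hu : p.coeff u ≠ 0)
    {j : σ} (hj : j ∈ u.support) : j ∈ s :=
  mem_supported.mp hs ((mem_vars_iff_mem_support j).mpr ⟨u, mem_support_iff.mpr hu, hj⟩)

namespace MvPolynomial.IsWeightedHomogeneous

variable {R : Type*} [CommSemiring R] {p : MvPolynomial ℕ R} {k e : ℕ} {u : ℕ →₀ ℕ}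

theorem le_degree (hp : p.IsWeightedHomogeneous (fun j : ℕ => (j : ℤ)) (k * e : ℕ))
    (hs : p ∈ supported R (Set.Iic k)) (hu : p.coeff u ≠ 0) (hk : 0 < k) : e ≤ u.degree := by
  have h := Finsupp.weight_le_mul_degree fun j hj => mem_of_mem_supported hs hu hj
  rw [hp hu, Nat.cast_mul] at h
  exact_mod_cast le_of_mul_le_mul_left h (by exact_mod_cast hk)

theorem eq_single_of_degree_eq (hp : p.IsWeightedHomogeneous (fun j : ℕ => (j : ℤ)) (k * e : ℕ))
    (hs : p ∈ supported R (Set.Iic k)) (hu : p.coeff u ≠ 0) (hdeg : u.degree = e) :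
    u = Finsupp.single k e := by
  rw [← hdeg]
  exact Finsupp.eq_single_of_weight_eq_mul_degree (fun j hj => mem_of_mem_supported hs hu hj)
    (by rw [hp hu, hdeg, Nat.cast_mul])

end MvPolynomial.IsWeightedHomogeneous

theorem MvPolynomial.coeff_single_aeval_piSingle {R σ : Type*} [CommSemiring R] [DecidableEq σ]
    (k : σ) (e : ℕ) (p : MvPolynomial σ R) :
    (aeval (Pi.single k (X k)) p).coeff (Finsupp.single k e) = p.coeff (Finsupp.single k e) := by
  induction p using MvPolynomial.induction_on' with
  | monomial u a =>
    rw [aeval_monomial, coeff_monomial, algebraMap_eq]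
    by_cases hu : u.support ⊆ {k}
    · rw [Finsupp.support_subset_singleton.mp hu, Finsupp.prod_single_index (by simp),
        Pi.single_eq_same, X_pow_eq_monomial, C_mul_monomial, mul_one, coeff_monomial]
    · obtain ⟨j, hj, hjk⟩ := Finset.not_subset.mp hu
      rw [Finsupp.prod, Finset.prod_eq_zero hj (by
          rw [Pi.single_eq_of_ne (Finset.notMem_singleton.mp hjk),
            zero_pow (Finsupp.mem_support_iff.mp hj)]),
        mul_zero, coeff_zero,
        if_neg fun h : u = Finsupp.single k e => hu (h ▸ Finsupp.support_single_subset)]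
  | add p q hp hq => rw [map_add, coeff_add, coeff_add, hp, hq]

theorem MvPolynomial.exists_eq_add_single_of_coeff_mul_X_ne_zero {R σ : Type*} [CommSemiring R]
    [DecidableEq σ] {p : MvPolynomial σ R} {s : σ} {m : σ →₀ ℕ} (h : (p * X s).coeff m ≠ 0) :
    ∃ u, m = u + Finsupp.single s 1 ∧ p.coeff u ≠ 0 := by
  rw [coeff_mul_X'] at h
  split_ifs at h with hs
  · refine ⟨m - Finsupp.single s 1, (tsub_add_cancel_of_le ?_).symm, h⟩
    exact Finsupp.single_le_iff.mpr (Nat.one_le_iff_ne_zero.mpr (Finsupp.mem_support_iff.mp hs))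
  · exact absurd rfl h

section GenericPolynomial

open MvPolynomial (supported)

theorem genF_coeff (d k : ℕ) : (genF d).coeff k =
    if k = d then 1 else if 1 ≤ k ∧ k ≤ d - 1 then MvPolynomial.X (d - k) else 0 := by
  have hterm (j) (hj : j ∈ Finset.Icc 1 (d - 1)) :
      (C (MvPolynomial.X (R := ℤ) j) * X ^ (d - j)).coeff k =
        if d - k = j then MvPolynomial.X (d - k) else 0 := by
    rw [Finset.mem_Icc] at hj
    rw [coeff_C_mul_X_pow]
    split_ifs <;> first | rfl | (exfalso; omega) | (congr 1; omega)
  rw [genF, coeff_add, coeff_X_pow, finsetSum_coeff, Finset.sum_congr rfl hterm,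
    Finset.sum_ite_eq]
  simp only [Finset.mem_Icc]
  split_ifs <;> first | (exfalso; omega) | simp

theorem isWeightedHomogeneous_genF_coeff (d k : ℕ) :
    ((genF d).coeff k).IsWeightedHomogeneous (fun j : ℕ => (j : ℤ)) (d - k) := by
  rw [genF_coeff]
  split_ifs with hkd hk
  · rw [hkd, sub_self]
    exact MvPolynomial.isWeightedHomogeneous_one (R := ℤ) _
  · convert MvPolynomial.isWeightedHomogeneous_X ℤ _ (d - k) using 1
    omega
  · exact MvPolynomial.isWeightedHomogeneous_zero _ _ _

theorem genF_coeff_mem_supported (d k : ℕ) :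
    (genF d).coeff k ∈ supported ℤ (Set.Iic (d - 1)) := by
  rw [genF_coeff]
  split_ifs with hkd hk
  · exact one_mem _
  · exact MvPolynomial.X_mem_supported.mpr (Set.mem_Iic.mpr (by omega))
  · exact zero_mem _

theorem genF_map_aeval_piSingle {d : ℕ} (hd : 2 ≤ d) :
    (genF d).map ((MvPolynomial.aeval (Pi.single (d - 1) (MvPolynomial.X (d - 1))) :
        MvPolynomial ℕ ℤ →ₐ[ℤ] MvPolynomial ℕ ℤ) : MvPolynomial ℕ ℤ →+* MvPolynomial ℕ ℤ) =
      X ^ d + C (MvPolynomial.X (d - 1)) * X := by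
  ext k : 1
  rw [coeff_map, genF_coeff, coeff_add, coeff_X_pow, coeff_C_mul, coeff_X]
  split_ifs <;> simp <;> first
    | (exfalso; omega)
    | rw [show d - k = d - 1 by omega, Pi.single_eq_same]
    | exact Pi.single_eq_of_ne (show d - k ≠ d - 1 by omega) _

theorem Rres_eq_sylvesterMinor_mul_X {d i n : ℕ} (hi : 1 ≤ i) (hn : d - i = n + 1) :
    Rres d i = sylvesterMinor (genF d) (hasseDeriv i (genF d)) d n * MvPolynomial.X (d - i) := by
  have hf : (genF d).coeff 0 = 0 := by rw [genF_coeff, if_neg (by omega), if_neg (by omega)]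
  rw [Rres, hn, res_eq_sylvesterMinor_mul n (by omega) hf, hasseDeriv_coeff, zero_add,
    Nat.choose_self, genF_coeff, if_neg (by omega), if_pos (by omega), ← hn, Nat.cast_one, one_mul]

theorem isWeightedHomogeneous_sylvesterMinor_genF {d i n : ℕ} (hn : d - i = n + 1) :
    (sylvesterMinor (genF d) (hasseDeriv i (genF d)) d n).IsWeightedHomogeneous
      (fun j : ℕ => (j : ℤ)) ((d - 1) * (d - i) : ℕ) := by
  rw [hn, mul_comm]
  exact isWeightedHomogeneous_sylvesterMinor n (by omega) (isWeightedHomogeneous_genF_coeff d)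
    fun k => by
      convert isWeightedHomogeneous_hasseDeriv_coeff (isWeightedHomogeneous_genF_coeff d) i k
        using 1
      omega

theorem sylvesterMinor_genF_mem_supported (d i n : ℕ) :
    sylvesterMinor (genF d) (hasseDeriv i (genF d)) d n ∈ supported ℤ (Set.Iic (d - 1)) :=
  sylvesterMinor_mem _ n (genF_coeff_mem_supported d)
    (hasseDeriv_coeff_mem _ (genF_coeff_mem_supported d) i)

theorem coeff_sylvesterMinor_genF {d i n : ℕ} (hd : 2 ≤ d) (hi : 2 ≤ i) (hn : d - i = n + 1) :
    (sylvesterMinor (genF d) (hasseDeriv i (genF d)) d n).coeff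
        (Finsupp.single (d - 1) (d - i)) =
      (-1) ^ ((d - 1) * (d - i)) * (d.choose i : ℤ) ^ (d - 1) := by
  rw [← MvPolynomial.coeff_single_aeval_piSingle, ← RingHom.coe_coe, sylvesterMinor_map,
    hasseDeriv_map, genF_map_aeval_piSingle hd, hasseDeriv_X_pow_add_C_mul_X _ _ hi, hn,
    sylvesterMinor_X_pow_add_C_mul_X _ _ n hd,
    show (-1) ^ ((d - 1) * (n + 1)) * (d.choose i : MvPolynomial ℕ ℤ) ^ (d - 1) =
      MvPolynomial.C ((-1) ^ ((d - 1) * (n + 1)) * (d.choose i : ℤ) ^ (d - 1)) by simp,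
    MvPolynomial.coeff_C_mul, MvPolynomial.coeff_X_pow, if_pos rfl, mul_one]

end GenericPolynomial

theorem resultant_min_degree_monomial_general (d i : ℕ)
    (hi1 : 2 ≤ i) (hi2 : i ≤ d - 1) :
    (∀ m : ℕ →₀ ℕ, MvPolynomial.coeff m (Rres d i) ≠ 0 →
        d - i + 1 ≤ m.sum fun _ e => e) ∧
    (∀ m : ℕ →₀ ℕ, MvPolynomial.coeff m (Rres d i) ≠ 0 →
        (m.sum fun _ e => e) = d - i + 1 →
        m = Finsupp.single (d - 1) (d - i) + Finsupp.single (d - i) 1) ∧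
    MvPolynomial.coeff (Finsupp.single (d - 1) (d - i) + Finsupp.single (d - i) 1)
        (Rres d i) =
      (-1) ^ ((d - 1) * (d - i)) * (d.choose i : ℤ) ^ (d - 1) := by
  obtain ⟨n, hn⟩ : ∃ n, d - i = n + 1 := ⟨d - i - 1, by omega⟩
  have hR := Rres_eq_sylvesterMinor_mul_X (by omega) hn
  have hQ := isWeightedHomogeneous_sylvesterMinor_genF hn
  have hQ_supp := sylvesterMinor_genF_mem_supported d i n
  have hdeg (u : ℕ →₀ ℕ) :
      ((u + Finsupp.single (d - i) 1).sum fun _ e => e) = u.degree + 1 := by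
    change (u + _).degree = _
    rw [map_add, Finsupp.degree_single]
  refine ⟨fun m hm => ?_, fun m hm hm_deg => ?_, ?_⟩
  · rw [hR] at hm
    obtain ⟨u, rfl, hu⟩ := MvPolynomial.exists_eq_add_single_of_coeff_mul_X_ne_zero hm
    rw [hdeg]
    have := hQ.le_degree hQ_supp hu (by omega)
    omega
  · rw [hR] at hm
    obtain ⟨u, rfl, hu⟩ := MvPolynomial.exists_eq_add_single_of_coeff_mul_X_ne_zero hm
    rw [hdeg] at hm_deg
    rw [hQ.eq_single_of_degree_eq hQ_supp hu (by omega)]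
  · rw [hR, MvPolynomial.coeff_mul_X, coeff_sylvesterMinor_genF (by omega) hi1 hn]

/-- Every monomial of `R_i` has total degree at least `d - i + 1`, and the unique monomial of
total degree exactly `d - i + 1` is `a_{d-1}^{d-i} a_{d-i}`, with coefficient
`(-1)^{(d-1)(d-i)} C(d,i)^{d-1}`. -/
theorem resultant_min_degree_monomial (d i : ℕ) (hd : 2 ≤ d)
    (hi1 : 2 ≤ i) (hi2 : i ≤ d - 1) :
    (∀ m : ℕ →₀ ℕ, MvPolynomial.coeff m (Rres d i) ≠ 0 →
        d - i + 1 ≤ m.sum fun _ e => e) ∧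
    (∀ m : ℕ →₀ ℕ, MvPolynomial.coeff m (Rres d i) ≠ 0 →
        (m.sum fun _ e => e) = d - i + 1 →
        m = Finsupp.single (d - 1) (d - i) + Finsupp.single (d - i) 1) ∧
    MvPolynomial.coeff (Finsupp.single (d - 1) (d - i) + Finsupp.single (d - i) 1)
        (Rres d i) =
      (-1) ^ ((d - 1) * (d - i)) * (d.choose i : ℤ) ^ (d - 1) :=
  resultant_min_degree_monomial_general d i hi1 hi2
end

section
/- For d ≥ 2 and i = 1, the coefficient of a_{d-1}^d in the resultant R_1 = Res(f, H_1(f)) ∈ Z[a_1,...,a_{d-1}] equals (-1)^{d-1}(d-1)^{d-1}. -/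
open Polynomial

/-!
Specialise `a_{d-1} ↦ t` and every other `a_j ↦ 0`: the coefficient of `a_{d-1}^d` in `R_1`
becomes the coefficient of `t^d` in `Res(g, g')` for `g = x^d + t x`. Since
`g = x (x^{d-1} + t)`, this is `Res(x, g') · Res(x^{d-1} + t, g') = g'(0) · Res(x^{d-1} + t, g')`,
and reducing `g' = d x^{d-1} + t` modulo `x^{d-1} + t` leaves the constant `(1 - d) t`, so
`Res(g, g') = t · ((1 - d) t)^{d-1}`.
-/

open scoped Matrix

section

variable {R : Type*} [CommRing R]

theorem sylvester_eq_transpose_submatrix_rev (f g : R[X]) (m n : ℕ) :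
    _root_.sylvester f g m n = (Polynomial.sylvester f g m n)ᵀ.submatrix Fin.rev Fin.rev := by
  ext i j
  have hi := i.isLt
  have hj := j.isLt
  simp only [_root_.sylvester, Polynomial.sylvester, Matrix.of_apply, Matrix.submatrix_apply,
    Matrix.transpose_apply, Fin.addCases, Set.mem_Icc, Fin.val_rev]
  split_ifs <;> simp_all <;> first | rfl | omega | (congr 1; omega)

theorem res_eq_resultant (f g : R[X]) (m n : ℕ) :
    res f g m n = resultant f g m n := by
  rw [res, sylvester_eq_transpose_submatrix_rev]
  exact (Matrix.det_submatrix_equiv_self Fin.revPerm _).trans (Matrix.det_transpose _)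

theorem coeff_aeval_piSingle_X {σ : Type*} [DecidableEq σ] (k : σ) (n : ℕ)
    (p : MvPolynomial σ R) :
    (MvPolynomial.aeval (Pi.single k X : σ → R[X]) p).coeff n =
      p.coeff (Finsupp.single k n) := by
  induction p using MvPolynomial.induction_on' with
  | monomial u a =>
    rw [MvPolynomial.aeval_monomial, MvPolynomial.coeff_monomial, Polynomial.algebraMap_apply,
      Algebra.algebraMap_self, RingHom.id_apply, coeff_C_mul]
    by_cases hu : u = Finsupp.single k (u k)
    · rw [hu, Finsupp.prod_single_index (by simp), Pi.single_eq_same, coeff_X_pow,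
        mul_ite, mul_one, mul_zero]
      simp only [(Finsupp.single_injective k).eq_iff, eq_comm]
    · obtain ⟨j, hj, hjk⟩ : ∃ j ∈ u.support, j ≠ k := by
        by_contra! h
        exact hu (Finsupp.support_subset_singleton.mp fun j hj => Finset.mem_singleton.mpr (h j hj))
      rw [Finsupp.prod, Finset.prod_eq_zero hj (by simp [hjk, Finsupp.mem_support_iff.mp hj]),
        coeff_zero, mul_zero, if_neg]
      rintro rfl
      simp [hjk] at hj
  | add p q hp hq => simp [hp, hq]

theorem derivative_X_pow_add_C_mul_X (a : R) (m : ℕ) :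
    derivative (X ^ (m + 1) + C a * X) = C ((m : R) + 1) * X ^ m + C a := by
  simp

theorem resultant_X_pow_add_C_mul_X_derivative (a : R) {m : ℕ} (hm : m ≠ 0) :
    resultant (X ^ (m + 1) + C a * X) (derivative (X ^ (m + 1) + C a * X)) (m + 1) m =
      (-(m : R)) ^ m * a ^ (m + 1) := by
  nontriviality R
  set h : R[X] := X ^ m + C a
  set g : R[X] := C ((m : R) + 1) * X ^ m + C a
  have hh : h.natDegree = m := natDegree_X_pow_add_C
  have hg : g.natDegree ≤ m :=
    natDegree_add_le_of_degree_le (natDegree_C_mul_X_pow_le _ _) (by simp)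
  have hg_mod : g = C (-(m : R) * a) + h * C ((m : R) + 1) := by
    simp only [g, h, map_mul, map_neg, map_add, map_natCast, map_one]
    ring
  have h_left : resultant X g 1 m = a := by
    rw [← sub_zero (X : R[X]), ← C_0, resultant_X_sub_C_left g m 0 hg]
    simp [g, hm]
  have h_right : resultant h g m m = (-(m : R) * a) ^ m := by
    rw [hg_mod, resultant_add_mul_right _ _ _ _ _ (by rw [natDegree_C, zero_add]) hh.le,
      resultant_C_right]
    simp [h, coeff_C, hm]
  have h_mul := resultant_mul_left X h g m hg
  rw [natDegree_X, hh, add_comm 1 m] at h_mul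
  rw [derivative_X_pow_add_C_mul_X, show X ^ (m + 1) + C a * X = X * h by ring, h_mul, h_left,
    h_right]
  ring

end

theorem map_genF_aeval_piSingle_X (m : ℕ) (hm : m ≠ 0) :
    (genF (m + 1)).map (MvPolynomial.aeval (Pi.single m X : ℕ → ℤ[X])).toRingHom =
      X ^ (m + 1) + C X * X := by
  rw [genF, Polynomial.map_add, Polynomial.map_pow, map_X, Polynomial.map_sum,
    Finset.sum_eq_single m]
  · simp
  · intro j _ hjm
    simp [hjm]
  · intro hm_notMem
    exact absurd (Finset.mem_Icc.mpr ⟨by omega, by omega⟩) hm_notMem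

/-- The coefficient of `a_{d-1}^d` in `R_1 = Res(f, H_1(f))` is `(-1)^{d-1} (d-1)^{d-1}`. -/
theorem coeff_pure_power_resultant_first (d : ℕ) (hd : 2 ≤ d) :
    MvPolynomial.coeff (Finsupp.single (d - 1) d) (Rres d 1) =
      (-1) ^ (d - 1) * ((d : ℤ) - 1) ^ (d - 1) := by
  obtain ⟨m, rfl⟩ : ∃ m, d = m + 1 := ⟨d - 1, by omega⟩
  have hm : m ≠ 0 := by omega
  set φ : MvPolynomial ℕ ℤ →+* ℤ[X] := (MvPolynomial.aeval (Pi.single m X : ℕ → ℤ[X])).toRingHom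
  have h_spec : φ (Rres (m + 1) 1) = C ((-(m : ℤ)) ^ m) * X ^ (m + 1) := by
    rw [Rres, res_eq_resultant, Nat.add_sub_cancel, ← resultant_map_map, hasseDeriv_one,
      ← derivative_map, map_genF_aeval_piSingle_X m hm,
      resultant_X_pow_add_C_mul_X_derivative _ hm]
    simp
  rw [Nat.add_sub_cancel, ← coeff_aeval_piSingle_X]
  change (φ (Rres (m + 1) 1)).coeff (m + 1) = _
  rw [h_spec, coeff_C_mul_X_pow, if_pos rfl]
  push_cast
  ring
end
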